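/- arXiv:2010.15542 — 5 statements merged into one kernel-verified Lean document; each statement's English description precedes it below -/
import Mathlib

section
/- The function G attains its maximum on C(γ) only at points with all entries strictly positive. More precisely, if μ ∈ C(γ) has some entry equal to 0, then μ is not a maximum point of G on C(γ). -/
/-!
If `μ k c₀ = 0`, the row sum `γ k > 0` gives an entry `a = μ k c₁ > 0`, and moving mass `t ≤ a`
from `(k, c₁)` to `(k, c₀)` stays in `C(γ)`. Since `0 ≤ α ≤ β`, the quadratic part of `G` drops by
at most `t L`, where `L = α T₁ + (β - α) a` (`T₁` the `c₁`-th column sum) is its slope in that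
direction. By concavity of `x ↦ -x log x` the entropy rises by at least
`t (log ((a - t) / t) + 1)`, which wins for small `t` because of the infinite slope at `0`:
for `t = a / (1 + exp L)` the net gain is at least `t > 0`.
-/

/-- The set `C(γ)` of `s × q` matrices with nonnegative entries whose `k`-th row sums to `γ k`. -/
def Cset (s q : ℕ) (γ : Fin s → ℝ) : Set (Fin s → Fin q → ℝ) :=
  {μ | (∀ k c, 0 ≤ μ k c) ∧ ∀ k, ∑ c, μ k c = γ k}

/-- The free energy functional `G` of the block spin Potts model. -/
noncomputable def G (s q : ℕ) (α β : ℝ) (μ : Fin s → Fin q → ℝ) : ℝ :=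
  (∑ c, ∑ k, β / 2 * (μ k c) ^ 2)
    + (∑ c, ∑ k, ∑ k' ∈ Finset.univ.filter (fun k' => k' ≠ k), α / 2 * (μ k c * μ k' c))
    - ∑ k, ∑ c, μ k c * Real.log (μ k c)

open Real Finset

section PiSingle

variable {ι M N : Type*} [Fintype ι] [DecidableEq ι] [AddCommGroup N]

theorem Fintype.sum_apply_add_single [AddCommMonoid M] (f : ι → M → N) (x : ι → M) (i : ι)
    (v : M) :
    ∑ l, f l (x l + (Pi.single i v : ι → M) l) = ∑ l, f l (x l) + (f i (x i + v) - f i (x i)) := by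
  rw [← sub_eq_iff_eq_add', ← sum_sub_distrib]
  refine (Fintype.sum_eq_single i fun l hl => ?_).trans (by simp)
  simp [Pi.single_eq_of_ne hl]

theorem Fintype.sum_apply_add_single_sub_single [AddCommGroup M] (f : ι → M → N) (x : ι → M)
    {i j : ι} (hij : i ≠ j) (v : M) :
    ∑ l, f l (x l + (Pi.single i v - Pi.single j v : ι → M) l)
      = ∑ l, f l (x l) + (f i (x i + v) - f i (x i)) + (f j (x j - v) - f j (x j)) := by
  calc ∑ l, f l (x l + (Pi.single i v - Pi.single j v : ι → M) l)
      = ∑ l, f l ((x + Pi.single i v : ι → M) l + (Pi.single j (-v) : ι → M) l) := by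
        simp only [Pi.add_apply, Pi.sub_apply, Pi.neg_apply, Pi.single_neg, add_assoc,
          sub_eq_add_neg]
    _ = _ := by
        rw [Fintype.sum_apply_add_single]
        simp only [Pi.add_apply, Fintype.sum_apply_add_single,
          Pi.single_eq_of_ne hij.symm, add_zero, sub_eq_add_neg]

end PiSingle

theorem Finset.sum_sum_filter_ne_mul {ι R : Type*} [Fintype ι] [DecidableEq ι] [CommRing R]
    (x : ι → R) :
    ∑ k, ∑ k' ∈ univ.filter (· ≠ k), x k * x k' = (∑ k, x k) ^ 2 - ∑ k, x k ^ 2 := by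
  have hrow : ∀ k, ∑ k' ∈ univ.filter (· ≠ k), x k * x k' = x k * ∑ k', x k' - x k ^ 2 := by
    intro k
    rw [filter_ne' univ k, ← mul_sum, sum_erase_eq_sub (mem_univ k), mul_sub, sq]
  rw [sum_congr rfl fun k _ => hrow k, sum_sub_distrib, ← sum_mul, sq]

theorem negMulLog_le_neg_mul_log_add_sub {x y : ℝ} (hx : 0 ≤ x) (hy : 0 < y) :
    negMulLog x ≤ -x * log y + (y - x) := by
  have hxy : x = y * (x / y) := by field_simp
  have key := negMulLog_le_one_sub_self (div_nonneg hx hy.le)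
  rw [hxy, negMulLog_mul, negMulLog]
  calc x / y * (-y * log y) + y * negMulLog (x / y)
      ≤ x / y * (-y * log y) + y * (1 - x / y) := by gcongr
    _ = -(y * (x / y)) * log y + (y - y * (x / y)) := by field_simp

theorem G_eq_sum_sq_add_sum (s q : ℕ) (α β : ℝ) (μ : Fin s → Fin q → ℝ) :
    G s q α β μ = α / 2 * ∑ c, (∑ k, μ k c) ^ 2
      + ∑ k, ∑ c, ((β - α) / 2 * μ k c ^ 2 + negMulLog (μ k c)) := by
  have hcol : ∀ c, ∑ k, ∑ k' ∈ univ.filter (· ≠ k), α / 2 * (μ k c * μ k' c)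
      = α / 2 * ((∑ k, μ k c) ^ 2 - ∑ k, μ k c ^ 2) := fun c => by
    simp only [← sum_sum_filter_ne_mul (fun k => μ k c), mul_sum]
  rw [G, sum_congr rfl fun c _ => hcol c]
  simp only [negMulLog, neg_mul, sum_neg_distrib, sum_add_distrib, mul_sub, sum_sub_distrib,
    ← mul_sum]
  rw [sum_comm (f := fun k c => μ k c ^ 2)]
  ring

section Transfer

variable {ι κ : Type*} [DecidableEq ι] [DecidableEq κ]

def transfer (μ : ι → κ → ℝ) (k : ι) (src dst : κ) (t : ℝ) : ι → κ → ℝ :=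
  μ + Pi.single k (Pi.single dst t - Pi.single src t)

theorem sum_transfer_apply [Fintype ι] (μ : ι → κ → ℝ) (k : ι) (src dst : κ) (t : ℝ) (c : κ) :
    ∑ k', transfer μ k src dst t k' c
      = ∑ k', μ k' c + (Pi.single dst t - Pi.single src t : κ → ℝ) c := by
  simp only [transfer, Pi.add_apply, sum_add_distrib]
  congr 1
  rw [Fintype.sum_eq_single k fun k' h => by rw [Pi.single_eq_of_ne h, Pi.zero_apply]]
  simp

theorem sum_transfer [Fintype κ] (μ : ι → κ → ℝ) (k k' : ι) (src dst : κ) (t : ℝ) :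
    ∑ c, transfer μ k src dst t k' c = ∑ c, μ k' c := by
  rcases eq_or_ne k' k with rfl | h
  · simp [transfer, sum_add_distrib]
  · simp [transfer, h]

end Transfer

theorem transfer_mem_Cset {s q : ℕ} {γ : Fin s → ℝ} {μ : Fin s → Fin q → ℝ}
    (hμ : μ ∈ Cset s q γ) (k : Fin s) (src dst : Fin q) {t : ℝ} (ht : 0 ≤ t) (hts : t ≤ μ k src) :
    transfer μ k src dst t ∈ Cset s q γ := by
  refine ⟨fun k' c => ?_, fun k' => (sum_transfer μ k k' src dst t).trans (hμ.2 k')⟩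
  rcases eq_or_ne k' k with rfl | hk
  · have hsrc : (Pi.single src t : Fin q → ℝ) c ≤ μ k' c := by
      rcases eq_or_ne c src with rfl | hc
      · simpa using hts
      · simpa [Pi.single_eq_of_ne hc] using hμ.1 k' c
    have hdst : 0 ≤ (Pi.single dst t : Fin q → ℝ) c :=
      (Pi.single_nonneg.2 ht : 0 ≤ (Pi.single dst t : Fin q → ℝ)) c
    simp only [transfer, Pi.add_apply, Pi.sub_apply, Pi.single_eq_same]
    linarith
  · simpa [transfer, hk] using hμ.1 k' c

theorem G_transfer_eq (s q : ℕ) (α β : ℝ) (μ : Fin s → Fin q → ℝ) (k : Fin s) {src dst : Fin q}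
    (hne : src ≠ dst) (t : ℝ) :
    G s q α β (transfer μ k src dst t) = G s q α β μ
      + α / 2 * ((∑ k', μ k' dst + t) ^ 2 - (∑ k', μ k' dst) ^ 2
        + ((∑ k', μ k' src - t) ^ 2 - (∑ k', μ k' src) ^ 2))
      + (β - α) / 2 * ((μ k dst + t) ^ 2 - μ k dst ^ 2 + ((μ k src - t) ^ 2 - μ k src ^ 2))
      + (negMulLog (μ k dst + t) - negMulLog (μ k dst)
        + (negMulLog (μ k src - t) - negMulLog (μ k src))) := by
  have hcols := Fintype.sum_apply_add_single_sub_single (fun _ y => y ^ 2)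
    (fun c => ∑ k', μ k' c) hne.symm t
  have hrows := Fintype.sum_apply_add_single
    (fun _ r => ∑ c, ((β - α) / 2 * r c ^ 2 + negMulLog (r c))) μ k
    (Pi.single dst t - Pi.single src t)
  have hrow := Fintype.sum_apply_add_single_sub_single
    (fun _ y => (β - α) / 2 * y ^ 2 + negMulLog y) (μ k) hne.symm t
  simp only [Pi.add_apply] at hrows
  simp only [G_eq_sum_sq_add_sum, sum_transfer_apply, hcols]
  simp only [transfer, Pi.add_apply, hrows, hrow]
  ring

theorem exists_transfer_gain_pos {α β a T₀ T₁ : ℝ} (hα : 0 ≤ α) (hαβ : α ≤ β) (hT₀ : 0 ≤ T₀)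
    (ha : 0 < a) :
    ∃ t, 0 < t ∧ t ≤ a ∧ 0 < α / 2 * ((T₀ + t) ^ 2 - T₀ ^ 2 + ((T₁ - t) ^ 2 - T₁ ^ 2))
      + (β - α) / 2 * (t ^ 2 + ((a - t) ^ 2 - a ^ 2))
      + (negMulLog t + (negMulLog (a - t) - negMulLog a)) := by
  set L := α * T₁ + (β - α) * a
  -- chosen so that `log ((a - t) / t) = L`
  set t := a / (1 + exp L)
  have ht : 0 < t := by positivity
  have hat : a - t = t * exp L := by
    simp only [t]
    field_simp
    ring
  have hta : t < a := by nlinarith [exp_pos L]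
  have hlog : log (a - t) = log t + L := by rw [hat, log_mul ht.ne' (exp_pos L).ne', log_exp]
  have hquad : -(t * L) ≤ α / 2 * ((T₀ + t) ^ 2 - T₀ ^ 2 + ((T₁ - t) ^ 2 - T₁ ^ 2))
      + (β - α) / 2 * (t ^ 2 + ((a - t) ^ 2 - a ^ 2)) := by
    nlinarith [mul_nonneg (mul_nonneg hα ht.le) hT₀, mul_nonneg (hα.trans hαβ) (sq_nonneg t)]
  have hent : t * (L + 1) ≤ negMulLog t + (negMulLog (a - t) - negMulLog a) := by
    have := negMulLog_le_neg_mul_log_add_sub ha.le (sub_pos.2 hta)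
    simp only [negMulLog] at this ⊢
    rw [hlog] at this ⊢
    linarith
  exact ⟨t, ht, hta.le, by linarith⟩

theorem maximizer_strictly_positive_general (s q : ℕ)
    (α β : ℝ) (hα : 0 < α) (hαβ : α < β)
    (γ : Fin s → ℝ) (hγ : ∀ k, γ k ∈ Set.Ioo (0 : ℝ) 1)
    (μ : Fin s → Fin q → ℝ) (hμ : μ ∈ Cset s q γ) (h0 : ∃ k c, μ k c = 0) :
    ¬ IsMaxOn (G s q α β) (Cset s q γ) μ := by
  obtain ⟨k, c₀, hzero⟩ := h0
  obtain ⟨c₁, -, hpos⟩ := exists_lt_of_sum_lt (s := univ) (f := fun _ => (0 : ℝ)) (g := μ k)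
    (by simpa [hμ.2 k] using (hγ k).1)
  have hne : c₁ ≠ c₀ := by rintro rfl; exact hpos.ne' hzero
  obtain ⟨t, ht, hta, hgain⟩ := exists_transfer_gain_pos (T₀ := ∑ k', μ k' c₀)
    (T₁ := ∑ k', μ k' c₁) hα.le hαβ.le (sum_nonneg fun k' _ => hμ.1 k' c₀) hpos
  intro hmax
  have hle : G s q α β (transfer μ k c₁ c₀ t) ≤ G s q α β μ :=
    hmax (transfer_mem_Cset hμ k c₁ c₀ ht.le hta)
  rw [G_transfer_eq s q α β μ k hne t, hzero, zero_add, negMulLog_zero] at hle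
  linarith

theorem maximizer_strictly_positive (s q : ℕ) (hs : 1 ≤ s) (hq : 1 ≤ q)
    (α β : ℝ) (hα : 0 < α) (hαβ : α < β)
    (γ : Fin s → ℝ) (hγ : ∀ k, γ k ∈ Set.Ioo (0 : ℝ) 1) (hγ1 : ∑ k, γ k = 1)
    (μ : Fin s → Fin q → ℝ) (hμ : μ ∈ Cset s q γ) (h0 : ∃ k c, μ k c = 0) :
    ¬ IsMaxOn (G s q α β) (Cset s q γ) μ :=
  maximizer_strictly_positive_general s q α β hα hαβ γ hγ μ hμ h0
end

section
/- Let μ ∈ C⁺(γ) be a critical point of G, i.e. satisfy β(μ_{kc} − γ_k/q) + α ∑_{k'≠k} (μ_{k'c} − γ_{k'}/q) = log(μ_{kc} / (∏_{d=1}^q μ_{kd})^{1/q}) for all k, c. If μ_{kc} = μ_{kc'} for some row k and columns c ≠ c', then μ_{k'c} = μ_{k'c'} for all rows k', provided the rows of μ are increasingly ordered. -/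
/-!
Subtracting the critical equations at `(k, c)` and `(k, c')` cancels both the `β`-term and the
logarithm when `μ k c = μ k c'`, so `α ≠ 0` forces the remaining rows to have the same sum in
columns `c` and `c'`. The rows being monotone, the differences `μ k' c' - μ k' c` all have the
same sign, so they all vanish.
-/

/-- The critical (Lagrange) equations for the block spin Potts free energy `G`. -/
def IsCritical (s q : ℕ) (α β : ℝ) (γ : Fin s → ℝ) (μ : Fin s → Fin q → ℝ) : Prop :=
  ∀ k c, β * (μ k c - γ k / q)
      + α * ∑ k' ∈ Finset.univ.filter (fun k' => k' ≠ k), (μ k' c - γ k' / q)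
    = Real.log (μ k c / (∏ d, μ k d) ^ ((1 : ℝ) / q))

theorem IsCritical.sum_filter_ne_eq_of_eq {s q : ℕ} {α β : ℝ} {γ : Fin s → ℝ}
    {μ : Fin s → Fin q → ℝ} (hcrit : IsCritical s q α β γ μ) (hα : α ≠ 0) {k : Fin s}
    {c c' : Fin q} (heq : μ k c = μ k c') :
    ∑ k' ∈ Finset.univ.filter (· ≠ k), μ k' c = ∑ k' ∈ Finset.univ.filter (· ≠ k), μ k' c' := by
  have hc := hcrit k c
  rw [heq] at hc
  have hsums : α * ∑ k' ∈ Finset.univ.filter (· ≠ k), (μ k' c - γ k' / q)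
      = α * ∑ k' ∈ Finset.univ.filter (· ≠ k), (μ k' c' - γ k' / q) := by
    linarith [hc.trans (hcrit k c').symm]
  simpa only [Finset.sum_sub_distrib, sub_left_inj] using mul_left_cancel₀ hα hsums

theorem IsCritical.apply_eq_of_apply_eq_of_le {s q : ℕ} {α β : ℝ} {γ : Fin s → ℝ}
    {μ : Fin s → Fin q → ℝ} (hcrit : IsCritical s q α β γ μ) (hα : α ≠ 0)
    (hmono : ∀ k, Monotone (μ k))
    {k : Fin s} {c c' : Fin q} (hle : c ≤ c') (heq : μ k c = μ k c') (k' : Fin s) :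
    μ k' c = μ k' c' := by
  obtain rfl | hk := eq_or_ne k' k
  · exact heq
  · exact (Finset.sum_eq_sum_iff_of_le fun i _ => hmono i hle).1
      (hcrit.sum_filter_ne_eq_of_eq hα heq) k' (by simpa using hk)

theorem critical_equal_entries_propagate_general (s q : ℕ) (α β : ℝ) (hα : 0 < α)
    (γ : Fin s → ℝ)
    (μ : Fin s → Fin q → ℝ)
    (hmono : ∀ k, Monotone (μ k))
    (hcrit : IsCritical s q α β γ μ)
    (k : Fin s) (c c' : Fin q) (heq : μ k c = μ k c') :
    ∀ k', μ k' c = μ k' c' := by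
  intro k'
  rcases le_total c c' with hle | hle
  · exact hcrit.apply_eq_of_apply_eq_of_le hα.ne' hmono hle heq k'
  · exact (hcrit.apply_eq_of_apply_eq_of_le hα.ne' hmono hle heq.symm k').symm

theorem critical_equal_entries_propagate (s q : ℕ) (α β : ℝ) (hα : 0 < α) (hαβ : α < β)
    (γ : Fin s → ℝ) (hγ : ∀ k, γ k ∈ Set.Ioo (0 : ℝ) 1) (hγ1 : ∑ k, γ k = 1)
    (μ : Fin s → Fin q → ℝ) (hpos : ∀ k c, 0 < μ k c) (hsum : ∀ k, ∑ c, μ k c = γ k)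
    (hmono : ∀ k, Monotone (μ k))
    (hcrit : IsCritical s q α β γ μ)
    (k : Fin s) (c c' : Fin q) (hcc' : c ≠ c') (heq : μ k c = μ k c') :
    ∀ k', μ k' c = μ k' c' :=
  critical_equal_entries_propagate_general s q α β hα γ μ hmono hcrit k c c' heq
end

section
/- Let μ ∈ C⁺(γ) be a critical point of G with increasingly ordered rows, satisfying the critical equations. Then each row of μ takes at most two distinct values: there are no three columns c < c' < c'' with μ_{kc} < μ_{kc'} < μ_{kc''} for any row k. -/
/-!
Subtracting the critical equations of two columns `d, e` in the same row `j` eliminates the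
geometric mean of the row and the constants `γ / q`, leaving
`log μ_je - log μ_jd = (β - α)(μ_je - μ_jd) + α (σ_e - σ_d)`, where `σ` are the column sums.
If a row had `μ_kc < μ_kc' < μ_kc''`, then by monotonicity `T₁ = σ_c' - σ_c` and
`T₂ = σ_c'' - σ_c'` are positive, which forces every row to be strictly increasing on `c, c', c''`.
Strict concavity of `log` on the three values of row `j` then gives, after the terms with
`β - α` cancel, `T₂ (μ_jc' - μ_jc) < T₁ (μ_jc'' - μ_jc')`; summing over `j` yields `T₂ T₁ < T₁ T₂`.
-/

open Finset Real

theorem IsCritical.log_sub_log {s q : ℕ} {α β : ℝ} {γ : Fin s → ℝ} {μ : Fin s → Fin q → ℝ}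
    (hcrit : IsCritical s q α β γ μ) (hpos : ∀ k c, 0 < μ k c) (j : Fin s) (d e : Fin q) :
    log (μ j e) - log (μ j d) = (β - α) * (μ j e - μ j d) + α * ∑ i, (μ i e - μ i d) := by
  have hmean : (∏ i, μ j i) ^ ((1 : ℝ) / q) ≠ 0 :=
    (rpow_pos_of_pos (prod_pos fun i _ => hpos j i) _).ne'
  have hcol (c : Fin q) : β * (μ j c - γ j / q)
      + α * ((∑ i, (μ i c - γ i / q)) - (μ j c - γ j / q))
      = log (μ j c) - log ((∏ i, μ j i) ^ ((1 : ℝ) / q)) := by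
    rw [← log_div (hpos j c).ne' hmean, ← hcrit j c, filter_ne', sum_erase_eq_sub (mem_univ j)]
  have hdiff : (∑ i, (μ i e - γ i / q)) - ∑ i, (μ i d - γ i / q) = ∑ i, (μ i e - μ i d) := by
    rw [← sum_sub_distrib]
    exact sum_congr rfl fun i _ => by ring
  linear_combination hcol d - hcol e + α * hdiff

theorem lt_of_log_sub_log_eq {x y κ t : ℝ} (hxy : x ≤ y)
    (h : log y - log x = κ * (y - x) + t) (ht : 0 < t) : x < y := by
  refine hxy.lt_of_ne fun hxy' => ?_
  rw [hxy'] at h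
  linarith

section ThreeColumns

variable {ι : Type*} [Fintype ι] {x y z : ι → ℝ} {κ α : ℝ}

theorem sum_sub_pos (hxy : ∀ j, x j ≤ y j) {k : ι} (hk : x k < y k) :
    0 < ∑ i, (y i - x i) :=
  sum_pos' (fun i _ => sub_nonneg.2 (hxy i)) ⟨k, mem_univ k, sub_pos.2 hk⟩

theorem not_lt_lt_of_log_sub_log_eq (hα : 0 < α) (hx : ∀ j, 0 < x j)
    (hxy : ∀ j, x j ≤ y j) (hyz : ∀ j, y j ≤ z j)
    (h₁ : ∀ j, log (y j) - log (x j) = κ * (y j - x j) + α * ∑ i, (y i - x i))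
    (h₂ : ∀ j, log (z j) - log (y j) = κ * (z j - y j) + α * ∑ i, (z i - y i)) (k : ι) :
    ¬ (x k < y k ∧ y k < z k) := by
  rintro ⟨hk₁, hk₂⟩
  set T₁ := ∑ i, (y i - x i)
  set T₂ := ∑ i, (z i - y i)
  have hT₁ : 0 < T₁ := sum_sub_pos hxy hk₁
  have hT₂ : 0 < T₂ := sum_sub_pos hyz hk₂
  have hlt₁ (j : ι) : x j < y j :=
    lt_of_log_sub_log_eq (hxy j) (h₁ j) (mul_pos hα hT₁)
  have hlt₂ (j : ι) : y j < z j :=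
    lt_of_log_sub_log_eq (hyz j) (h₂ j) (mul_pos hα hT₂)
  have hrow (j : ι) : T₂ * (y j - x j) < T₁ * (z j - y j) := by
    have hslope := strictConcaveOn_log_Ioi.slope_anti_adjacent (hx j)
      ((hx j).trans ((hlt₁ j).trans (hlt₂ j))) (hlt₁ j) (hlt₂ j)
    rw [h₁ j, h₂ j, div_lt_div_iff₀ (sub_pos.2 (hlt₂ j)) (sub_pos.2 (hlt₁ j))] at hslope
    nlinarith
  have hsum := sum_lt_sum_of_nonempty ⟨k, mem_univ k⟩ fun j _ => hrow j
  rw [← mul_sum, ← mul_sum] at hsum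
  linarith [mul_comm T₁ T₂]

end ThreeColumns

theorem critical_rows_at_most_two_values_general (s q : ℕ) (α β : ℝ) (hα : 0 < α)
    (γ : Fin s → ℝ)
    (μ : Fin s → Fin q → ℝ) (hpos : ∀ k c, 0 < μ k c)
    (hmono : ∀ k, Monotone (μ k))
    (hcrit : IsCritical s q α β γ μ) :
    ¬ ∃ (k : Fin s) (c c' c'' : Fin q), c < c' ∧ c' < c'' ∧
      μ k c < μ k c' ∧ μ k c' < μ k c'' := by
  rintro ⟨k, c, c', c'', hcc', hc'c'', hk⟩
  exact not_lt_lt_of_log_sub_log_eq hα (fun j => hpos j c)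
    (fun j => hmono j hcc'.le) (fun j => hmono j hc'c''.le)
    (fun j => hcrit.log_sub_log hpos j c c') (fun j => hcrit.log_sub_log hpos j c' c'') k hk

theorem critical_rows_at_most_two_values (s q : ℕ) (α β : ℝ) (hα : 0 < α) (hαβ : α < β)
    (γ : Fin s → ℝ) (hγ : ∀ k, γ k ∈ Set.Ioo (0 : ℝ) 1) (hγ1 : ∑ k, γ k = 1)
    (μ : Fin s → Fin q → ℝ) (hpos : ∀ k c, 0 < μ k c) (hsum : ∀ k, ∑ c, μ k c = γ k)
    (hmono : ∀ k, Monotone (μ k))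
    (hcrit : IsCritical s q α β γ μ) :
    ¬ ∃ (k : Fin s) (c c' c'' : Fin q), c < c' ∧ c' < c'' ∧
      μ k c < μ k c' ∧ μ k c' < μ k c'' :=
  critical_rows_at_most_two_values_general s q α β hα γ μ hpos hmono hcrit
end

section
/- If a critical point μ of G satisfies the critical equations, then G(μ) = (1/(2q))((β−α)‖γ‖² + α) − (1/(2q)) ∑_{k=1}^s ∑_{c=1}^q (γ_k + q μ_{kc}) log μ_{kc}. -/
/-!
Multiplying the critical equation at `(k, c)` by `μ k c` and summing over all `k, c` expresses
the quadratic part `β ∑ μ_kc² + α ∑_{k' ≠ k} μ_kc μ_k'c` of `2 G` through the entropy terms; the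
constant terms collapse to `((β - α) ‖γ‖² + α) / q` because the rows of `μ` sum to `γ` and
`∑ γ_k = 1`. Substituting this into `G` gives the formula.
-/

open Finset Real

lemma Finset.sum_filter_ne_eq_sub {ι M : Type*} [Fintype ι] [DecidableEq ι] [AddCommGroup M]
    (f : ι → M) (i : ι) : ∑ j ∈ univ.filter (fun j => j ≠ i), f j = ∑ j, f j - f i := by
  rw [filter_ne', sum_erase_eq_sub (mem_univ i)]

lemma Real.log_div_prod_rpow {ι : Type*} (t : Finset ι) {x : ℝ} (hx : x ≠ 0) {f : ι → ℝ}
    (hf : ∀ i ∈ t, 0 < f i) (r : ℝ) :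
    log (x / (∏ i ∈ t, f i) ^ r) = log x - r * ∑ i ∈ t, log (f i) := by
  have hprod : 0 < ∏ i ∈ t, f i := prod_pos hf
  rw [log_div hx (rpow_pos_of_pos hprod r).ne', log_rpow hprod,
    log_prod fun i hi => (hf i hi).ne']

lemma G_eq_sum_rows (s q : ℕ) (α β : ℝ) (μ : Fin s → Fin q → ℝ) :
    G s q α β μ = β / 2 * ∑ k, ∑ c, μ k c ^ 2
      + α / 2 * ∑ k, ∑ c, μ k c * ∑ k' ∈ univ.filter (fun k' => k' ≠ k), μ k' c
      - ∑ k, ∑ c, μ k c * log (μ k c) := by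
  simp only [G, mul_sum]
  rw [sum_comm (γ := Fin q), sum_comm (γ := Fin q) (f := fun c k => ∑ k' ∈ _, _)]

section

variable {s q : ℕ} {α β : ℝ} {γ : Fin s → ℝ} {μ : Fin s → Fin q → ℝ}

lemma IsCritical.eq_log_sub (hcrit : IsCritical s q α β γ μ) (hpos : ∀ k c, 0 < μ k c)
    (k : Fin s) (c : Fin q) :
    β * (μ k c - γ k / q) + α * ∑ k' ∈ univ.filter (fun k' => k' ≠ k), (μ k' c - γ k' / q)
      = log (μ k c) - 1 / q * ∑ d, log (μ k d) :=
  (hcrit k c).trans <| log_div_prod_rpow _ (hpos k c).ne' (fun d _ => hpos k d) _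

lemma IsCritical.energy_eq (hcrit : IsCritical s q α β γ μ) (hpos : ∀ k c, 0 < μ k c)
    (hsum : ∀ k, ∑ c, μ k c = γ k) (hγ1 : ∑ k, γ k = 1) :
    β * ∑ k, ∑ c, μ k c ^ 2
      + α * ∑ k, ∑ c, μ k c * ∑ k' ∈ univ.filter (fun k' => k' ≠ k), μ k' c
      = ∑ k, ∑ c, μ k c * log (μ k c) - 1 / q * ∑ k, γ k * ∑ c, log (μ k c)
        + ((β - α) * ∑ k, γ k ^ 2 + α) / q := by
  have hpoint : ∀ k c, μ k c * (β * μ k c + α * ∑ k' ∈ univ.filter (fun k' => k' ≠ k), μ k' c)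
      = μ k c * log (μ k c) - μ k c * (1 / q * ∑ d, log (μ k d))
        + μ k c * ((β * γ k + α * (1 - γ k)) / q) := by
    intro k c
    have h := hcrit.eq_log_sub hpos k c
    rw [sum_sub_distrib, ← sum_div, sum_filter_ne_eq_sub γ k, hγ1] at h
    linear_combination μ k c * h
  have hrow : ∀ k, ∑ c, μ k c * (β * μ k c + α * ∑ k' ∈ univ.filter (fun k' => k' ≠ k), μ k' c)
      = ∑ c, μ k c * log (μ k c) - 1 / q * (γ k * ∑ c, log (μ k c))
        + γ k * ((β * γ k + α * (1 - γ k)) / q) := by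
    intro k
    rw [sum_congr rfl fun c _ => hpoint k c, sum_add_distrib, sum_sub_distrib, ← sum_mul,
      ← sum_mul, hsum k]
    ring
  have hweights : ∑ k, γ k * ((β * γ k + α * (1 - γ k)) / q)
      = ((β - α) * ∑ k, γ k ^ 2 + α) / q := by
    have h : ∀ k, γ k * ((β * γ k + α * (1 - γ k)) / q) = ((β - α) * γ k ^ 2 + α * γ k) / q :=
      fun k => by ring
    rw [sum_congr rfl fun k _ => h k, ← sum_div, sum_add_distrib, ← mul_sum, ← mul_sum, hγ1,
      mul_one]
  calc _ = ∑ k, ∑ c,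
          μ k c * (β * μ k c + α * ∑ k' ∈ univ.filter (fun k' => k' ≠ k), μ k' c) := by
        simp only [mul_add, sum_add_distrib, mul_sum, mul_left_comm, pow_two]
    _ = _ := by
      rw [sum_congr rfl fun k _ => hrow k, sum_add_distrib, sum_sub_distrib, ← mul_sum, hweights]

end

theorem G_at_critical_point_general (s q : ℕ) (hq : 1 ≤ q) (α β : ℝ)
    (γ : Fin s → ℝ) (hγ1 : ∑ k, γ k = 1)
    (μ : Fin s → Fin q → ℝ) (hpos : ∀ k c, 0 < μ k c) (hsum : ∀ k, ∑ c, μ k c = γ k)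
    (hcrit : IsCritical s q α β γ μ) :
    G s q α β μ = 1 / (2 * q) * ((β - α) * (∑ k, (γ k) ^ 2) + α)
      - 1 / (2 * q) * ∑ k, ∑ c, (γ k + q * μ k c) * Real.log (μ k c) := by
  have hq0 : (q : ℝ) ≠ 0 := Nat.cast_ne_zero.mpr (by omega)
  have hsplit : ∑ k, ∑ c, (γ k + q * μ k c) * log (μ k c)
      = ∑ k, γ k * ∑ c, log (μ k c) + q * ∑ k, ∑ c, μ k c * log (μ k c) := by
    simp only [add_mul, sum_add_distrib, mul_sum, mul_assoc]
  have henergy := hcrit.energy_eq hpos hsum hγ1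
  rw [G_eq_sum_rows, hsplit]
  field_simp at henergy ⊢
  linear_combination henergy

theorem G_at_critical_point (s q : ℕ) (hq : 1 ≤ q) (α β : ℝ) (hα : 0 < α) (hαβ : α < β)
    (γ : Fin s → ℝ) (hγ : ∀ k, γ k ∈ Set.Ioo (0 : ℝ) 1) (hγ1 : ∑ k, γ k = 1)
    (μ : Fin s → Fin q → ℝ) (hpos : ∀ k c, 0 < μ k c) (hsum : ∀ k, ∑ c, μ k c = γ k)
    (hcrit : IsCritical s q α β γ μ) :
    G s q α β μ = 1 / (2 * q) * ((β - α) * (∑ k, (γ k) ^ 2) + α)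
      - 1 / (2 * q) * ∑ k, ∑ c, (γ k + q * μ k c) * Real.log (μ k c) :=
  G_at_critical_point_general s q hq α β γ hγ1 μ hpos hsum hcrit
end

section
/- If q ≤ 2r (with r ≤ q−1), then w is strictly increasing on [1/(sq), 1/(sr)), i.e. w'(x) > 0 for x ∈ (1/(sq), 1/(sr)). -/
noncomputable def w (s q r : ℕ) (x : ℝ) : ℝ :=
  -(((q : ℝ) - r) + q * (1 - s * r * x)) * Real.log ((1 - s * r * x) / (s * ((q : ℝ) - r)))
    - r * (1 + s * q * x) * Real.log x

noncomputable def w' (s q r : ℕ) (x : ℝ) : ℝ :=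
  (s : ℝ) * r * q * Real.log ((1 - s * r * x) / (s * ((q : ℝ) - r) * x))
    + r * ((s : ℝ) * q * x - 1) / (x * (1 - s * r * x))

/-! Substituting `t = s(q-r)x / (1 - srx)`, which maps `(1/(sq), 1/(sr))` onto `(1, ∞)`, turns
`w'(x)` into `sr ((t-1)(rt+q-r)/t - q log t)`. Since `log t < (t - t⁻¹)/2 = sinh (log t)` for
`t > 1`, this is positive as soon as `(2r - q)(t - 1) ≥ 0`. -/

open Real Set

lemma log_lt_sub_inv_div_two {t : ℝ} (ht : 1 < t) : log t < (t - t⁻¹) / 2 := by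
  rw [← sinh_log (by linarith)]
  exact self_lt_sinh_iff.mpr (log_pos ht)

lemma mul_log_lt_of_le_two_mul {q r t : ℝ} (hq : 0 < q) (hqr : q ≤ 2 * r) (ht : 1 < t) :
    q * log t < (t - 1) * (r * t + q - r) / t := by
  have ht₀ : 0 < t := by linarith
  calc q * log t < q * ((t - t⁻¹) / 2) := mul_lt_mul_of_pos_left (log_lt_sub_inv_div_two ht) hq
    _ = (t - 1) * (q * (t + 1) / 2) / t := by field_simp; ring
    _ ≤ (t - 1) * (r * t + q - r) / t := by gcongr; nlinarith

lemma hasDerivAt_w {s q r : ℕ} {x : ℝ} (hx : x ≠ 0) (hx' : 1 - s * r * x ≠ 0)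
    (hs : (s : ℝ) ≠ 0) (hqr : (q : ℝ) - r ≠ 0) : HasDerivAt (w s q r) (w' s q r x) x := by
  have harg : (1 - s * r * x) / (s * ((q : ℝ) - r)) ≠ 0 := div_ne_zero hx' (mul_ne_zero hs hqr)
  have hdec : HasDerivAt (fun y : ℝ => 1 - s * r * y) (-(s * r)) x := by
    simpa using ((hasDerivAt_id x).const_mul ((s : ℝ) * r)).const_sub 1
  have hinc : HasDerivAt (fun y : ℝ => 1 + s * q * y) (s * q) x := by
    simpa using ((hasDerivAt_id x).const_mul ((s : ℝ) * q)).const_add 1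
  have h := (((hdec.const_mul (q : ℝ)).const_add ((q : ℝ) - r)).neg.mul
      ((hdec.div_const ((s : ℝ) * (q - r))).log harg)).sub
    ((hinc.const_mul (r : ℝ)).mul (hasDerivAt_log hx))
  refine h.congr_deriv ?_
  rw [w', ← div_div (1 - (s : ℝ) * r * x) _ x, log_div harg hx, Pi.neg_apply]
  field_simp
  ring

lemma w'_eq {s q r : ℕ} {x t : ℝ} (hx : x ≠ 0) (hx' : 1 - s * r * x ≠ 0)
    (hs : (s : ℝ) ≠ 0) (hqr : (q : ℝ) - r ≠ 0) (ht : t = s * (q - r) * x / (1 - s * r * x)) :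
    w' s q r x = s * r * ((t - 1) * (r * t + q - r) / t - q * log t) := by
  subst ht
  rw [w', ← inv_div ((s : ℝ) * (q - r) * x), log_inv]
  field_simp
  ring

lemma pos_and_one_sub_mul_pos_of_mem_Ico {a b x : ℝ} (ha : 0 < a) (hb : 0 < b)
    (hx : x ∈ Ico (1 / a) (1 / b)) : 0 < x ∧ 0 < 1 - b * x :=
  ⟨(one_div_pos.2 ha).trans_le hx.1, by have := (lt_div_iff₀ hb).1 hx.2; linarith⟩

lemma w'_pos {s q r : ℕ} {x : ℝ} (hs : (0 : ℝ) < s) (hr : (0 : ℝ) < r) (hrq : (r : ℝ) < q)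
    (hq : (q : ℝ) ≤ 2 * r) (hx : x ∈ Ioo (1 / ((s : ℝ) * q)) (1 / ((s : ℝ) * r))) :
    0 < w' s q r x := by
  have hsq : (0 : ℝ) < s * q := mul_pos hs (hr.trans hrq)
  obtain ⟨hx₀, hx₁⟩ :=
    pos_and_one_sub_mul_pos_of_mem_Ico hsq (mul_pos hs hr) (Ioo_subset_Ico_self hx)
  have hsqx : 1 < s * q * x := by have := (div_lt_iff₀ hsq).1 hx.1; linarith
  have ht : 1 < s * (q - r) * x / (1 - s * r * x) := by rw [one_lt_div hx₁]; linarith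
  rw [w'_eq hx₀.ne' hx₁.ne' hs.ne' (sub_pos.2 hrq).ne' rfl]
  exact mul_pos (mul_pos hs hr) (sub_pos.2 (mul_log_lt_of_le_two_mul (hr.trans hrq) hq ht))

theorem w_strictMono_of_q_le_two_r (s q r : ℕ) (hs : 1 ≤ s) (hr : 1 ≤ r) (hrq : r ≤ q - 1)
    (hq2r : q ≤ 2 * r) :
    StrictMonoOn (w s q r) (Set.Ico (1 / ((s : ℝ) * q)) (1 / ((s : ℝ) * r))) ∧
      ∀ x ∈ Set.Ioo (1 / ((s : ℝ) * q)) (1 / ((s : ℝ) * r)), 0 < w' s q r x := by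
  have hS : (0 : ℝ) < s := by exact_mod_cast hs
  have hR : (0 : ℝ) < r := by exact_mod_cast hr
  have hRQ : (r : ℝ) < q := by exact_mod_cast (by omega : r < q)
  have hpos : ∀ x ∈ Ioo (1 / ((s : ℝ) * q)) (1 / ((s : ℝ) * r)), 0 < w' s q r x :=
    fun x => w'_pos hS hR hRQ (by exact_mod_cast hq2r)
  have hderiv : ∀ x ∈ Ico (1 / ((s : ℝ) * q)) (1 / ((s : ℝ) * r)),
      HasDerivAt (w s q r) (w' s q r x) x := fun x hx =>
    have hx' := pos_and_one_sub_mul_pos_of_mem_Ico (mul_pos hS (hR.trans hRQ)) (mul_pos hS hR) hx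
    hasDerivAt_w hx'.1.ne' hx'.2.ne' hS.ne' (sub_pos.2 hRQ).ne'
  refine ⟨strictMonoOn_of_deriv_pos (convex_Ico _ _)
    (fun x hx => (hderiv x hx).continuousAt.continuousWithinAt) fun x hx => ?_, hpos⟩
  rw [interior_Ico] at hx
  rw [(hderiv x (Ioo_subset_Ico_self hx)).deriv]
  exact hpos x hx
end
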